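/- Let F be a field (or more generally a commutative ring), let A be a k×k matrix over F, and let 2 ≤ r ≤ k. Then Σ_{π ∈ S_k} δ_r(P_π·A) = 0, where for a k×k matrix B, δ_r(B) = Σ_{J} det(B_J), the sum being over all r-element subsets J of {1,…,k} and B_J denoting the r×r submatrix of B whose rows and columns are those indexed by J. -/

import Mathlib

/-!
Left multiplication by `P_π` permutes the rows of `A`, so for a fixed `J` containing two
distinct indices `a ≠ b`, replacing `π` by `swap a b * π` swaps two rows of the principal
submatrix on `J` and flips the sign of its determinant. This sign-reversing involution of
`S_k` cancels the sum over `π` of each principal `r × r` minor, once `r ≥ 2`.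
-/

open Matrix

/-- The permutation matrix of `σ`: the `(i, j)` entry is `1` if `σ j = i` and `0` otherwise. -/
def permMat (F : Type*) [Zero F] [One F] {n : Type*} [DecidableEq n]
    (σ : Equiv.Perm n) : Matrix n n F :=
  Matrix.of fun i j => if σ j = i then 1 else 0

/-- A matrix `G` over a field is an LCED matrix if there is a permutation matrix `P`
such that `G * P * Gᵀ` is invertible. -/
def IsLCEDMatrix {F : Type*} [Field F] {k n : Type*} [Fintype k] [Fintype n]
    [DecidableEq k] [DecidableEq n] (G : Matrix k n F) : Prop :=
  ∃ σ : Equiv.Perm n, IsUnit (G * permMat F σ * Gᵀ)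

theorem permMat_eq_permMatrix_inv (R : Type*) [Zero R] [One R] {n : Type*} [DecidableEq n]
    (σ : Equiv.Perm n) : permMat R σ = (σ⁻¹).permMatrix R := by
  ext i j
  simp [permMat, PEquiv.toMatrix_apply, Equiv.eq_symm_apply, eq_comm]

theorem permMat_mul_eq_submatrix {R : Type*} [NonAssocSemiring R] {n : Type*} [Fintype n]
    [DecidableEq n] (σ : Equiv.Perm n) (A : Matrix n n R) :
    permMat R σ * A = A.submatrix σ.symm id := by
  rw [permMat_eq_permMatrix_inv, PEquiv.toMatrix_toPEquiv_mul, Equiv.Perm.inv_def]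

theorem Equiv.Perm.sum_eq_zero_of_swap_mul_eq_neg {n M : Type*} [Fintype n] [DecidableEq n]
    [AddCommGroup M] (f : Equiv.Perm n → M) {a b : n} (hab : a ≠ b)
    (hf : ∀ π, f (Equiv.swap a b * π) = -f π) : ∑ π, f π = 0 := by
  refine Finset.sum_involution (fun π _ => Equiv.swap a b * π) (fun π _ => by simp [hf])
    (fun π _ _ h => hab (Eq.symm ?_)) (fun _ _ => Finset.mem_univ _)
    (fun π _ => by rw [← mul_assoc, Equiv.swap_mul_self, one_mul])
  simpa using congrArg (fun σ : Equiv.Perm n => σ (π⁻¹ a)) h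

theorem det_principal_submatrix_swap_rows {R : Type*} [CommRing R] {n : Type*} [DecidableEq n]
    (B : Matrix n n R) {J : Finset n} {a b : n} (ha : a ∈ J) (hb : b ∈ J) (hab : a ≠ b) :
    ((B.submatrix (Equiv.swap a b) id).submatrix ((↑) : J → n) ((↑) : J → n)).det =
      -(B.submatrix ((↑) : J → n) ((↑) : J → n)).det := by
  have hswap : (B.submatrix (Equiv.swap a b) id).submatrix ((↑) : J → n) ((↑) : J → n) =
      (B.submatrix ((↑) : J → n) ((↑) : J → n)).submatrix
        (Equiv.swap (⟨a, ha⟩ : J) ⟨b, hb⟩) id := by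
    ext x y
    simp [← Function.Injective.swap_apply Subtype.coe_injective]
  rw [hswap, det_permute, Equiv.Perm.sign_swap (by simpa [Subtype.ext_iff] using hab)]
  simp

theorem stmt16_general {R : Type*} [CommRing R] {k r : ℕ} (hr : 2 ≤ r)
    (A : Matrix (Fin k) (Fin k) R) :
    ∑ π : Equiv.Perm (Fin k),
      ∑ J ∈ Finset.powersetCard r (Finset.univ : Finset (Fin k)),
        ((permMat R π * A).submatrix (fun x : J => (x : Fin k))
          (fun x : J => (x : Fin k))).det = 0 := by
  rw [Finset.sum_comm]
  refine Finset.sum_eq_zero fun J hJ => ?_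
  obtain ⟨a, ha, b, hb, hab⟩ :=
    Finset.one_lt_card.mp (by rw [(Finset.mem_powersetCard.mp hJ).2]; omega)
  refine Equiv.Perm.sum_eq_zero_of_swap_mul_eq_neg _ hab fun π => ?_
  have hrows : A.submatrix (Equiv.swap a b * π).symm id =
      (A.submatrix π.symm id).submatrix (Equiv.swap a b) id := rfl
  simp only [permMat_mul_eq_submatrix, hrows]
  exact det_principal_submatrix_swap_rows _ ha hb hab

/-- for `2 ≤ r ≤ k`, `Σ_{π ∈ S_k} δ_r(P_π·A) = 0`, where
`δ_r(B) = Σ_{|J| = r} det(B_J)` is the sum of the principal `r × r` minors of `B`. -/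
theorem stmt16 {R : Type*} [CommRing R] {k r : ℕ} (hr : 2 ≤ r) (hrk : r ≤ k)
    (A : Matrix (Fin k) (Fin k) R) :
    ∑ π : Equiv.Perm (Fin k),
      ∑ J ∈ Finset.powersetCard r (Finset.univ : Finset (Fin k)),
        ((permMat R π * A).submatrix (fun x : J => (x : Fin k))
          (fun x : J => (x : Fin k))).det = 0 :=
  stmt16_general hr A
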